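/- arXiv:math/9902114 — 3 statements merged into one kernel-verified Lean document; each statement's English description precedes it below -/
import Mathlib

section
/- Let ν > 0 and let k_ν(x,y) := x^(ν+1/2)·(y^(1/2−ν) − y^(ν+1/2))/(2ν) for 0 < x ≤ y ≤ 1, extended symmetrically by k_ν(x,y) := k_ν(y,x) for y < x. Then the function (x,y) ↦ x^(−1)·k_ν(min(x,y), max(x,y)) is square-integrable on (0,1) × (0,1) with respect to Lebesgue measure; in particular ∫₀¹ ∫₀^y x^(−2)·k_ν(x,y)² dx dy ≤ 1/(4ν³). (This expresses that the operator X^(−1)·L_ν^(−1), where X is multiplication by x, is Hilbert–Schmidt on L²[0,1].) -/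
open Set MeasureTheory

private lemma rpow_sq' {x : ℝ} (hx : 0 ≤ x) (a : ℝ) : (x ^ a) ^ 2 = x ^ (2*a) := by
  rw [← Real.rpow_natCast (x ^ a) 2, ← Real.rpow_mul hx]
  norm_num [mul_comm]

/-- key bound on the lower triangle -/
private lemma k_le (ν x y : ℝ) (hν : 0 < ν) (hx : 0 < x) (hxy : x ≤ y) (hy1 : y ≤ 1) :
    (x ^ (ν + 1/2) * (y ^ (1/2 - ν) - y ^ (ν + 1/2)) / (2 * ν)) ^ 2 / x ^ 2
      ≤ x ^ (2*ν - 1) * y ^ (1 - 2*ν) / (4 * ν^2) := by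
  have hy : 0 < y := hx.trans_le hxy
  set A := y ^ (1/2 - ν) - y ^ (ν + 1/2) with hA
  have hA0 : 0 ≤ A := sub_nonneg.2 (Real.rpow_le_rpow_of_exponent_ge hy hy1 (by linarith))
  have hA1 : A ≤ y ^ (1/2 - ν) := sub_le_self _ (Real.rpow_nonneg hy.le _)
  have hA2 : A^2 ≤ y ^ (1 - 2*ν) := by
    rw [show (1 - 2*ν) = 2*(1/2 - ν) by ring, ← rpow_sq' hy.le]
    exact pow_le_pow_left₀ hA0 hA1 2
  have hx2 : (x ^ (ν + 1/2))^2 = x ^ (2*ν + 1) := by rw [rpow_sq' hx.le]; ring_nf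
  have hfact : x ^ (2*ν + 1) = x ^ (2*ν - 1) * x^2 := by
    rw [← Real.rpow_natCast x 2, ← Real.rpow_add hx]; congr 1; push_cast; ring
  have expand : (x ^ (ν + 1/2) * A / (2 * ν)) ^ 2 / x ^ 2
      = x ^ (2*ν - 1) * A^2 / (4 * ν^2) := by
    rw [div_pow, mul_pow, hx2, hfact]
    field_simp
    ring
  rw [expand]
  gcongr

/-- key bound on the upper triangle -/
private lemma k_le2 (ν x y : ℝ) (hν : 0 < ν) (hy : 0 < y) (hyx : y ≤ x) (hx1 : x ≤ 1) :
    (y ^ (ν + 1/2) * (x ^ (1/2 - ν) - x ^ (ν + 1/2)) / (2 * ν)) ^ 2 / x ^ 2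
      ≤ 1 / (4 * ν^2) := by
  have hx : 0 < x := hy.trans_le hyx
  set B := x ^ (1/2 - ν) - x ^ (ν + 1/2) with hB
  have hB0 : 0 ≤ B := sub_nonneg.2 (Real.rpow_le_rpow_of_exponent_ge hx hx1 (by linarith))
  have hB1 : B ≤ x ^ (1/2 - ν) := sub_le_self _ (Real.rpow_nonneg hx.le _)
  have hB2 : B^2 ≤ x ^ (1 - 2*ν) := by
    rw [show (1 - 2*ν) = 2*(1/2 - ν) by ring, ← rpow_sq' hx.le]
    exact pow_le_pow_left₀ hB0 hB1 2
  have hyx2 : (y ^ (ν + 1/2))^2 ≤ x ^ (2*ν + 1) := by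
    rw [show (2*ν+1) = 2*(ν+1/2) by ring, ← rpow_sq' hx.le]
    exact pow_le_pow_left₀ (Real.rpow_nonneg hy.le _)
      (Real.rpow_le_rpow hy.le hyx (by linarith)) 2
  have hxx : x ^ (2*ν + 1) * x ^ (1 - 2*ν) = x^2 := by
    rw [← Real.rpow_add hx, ← Real.rpow_natCast x 2]; congr 1; push_cast; ring
  have hnum : (y ^ (ν + 1/2) * B) ^ 2 ≤ x ^ 2 := by
    rw [mul_pow, ← hxx]
    exact mul_le_mul hyx2 hB2 (sq_nonneg _) (Real.rpow_nonneg hx.le _)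
  rw [div_pow, mul_pow]
  rw [div_div, div_le_div_iff₀ (by positivity) (by positivity), one_mul]
  calc (y ^ (ν + 1/2))^2 * B^2 * (4*ν^2) ≤ x^2 * (4*ν^2) := by
        rw [← mul_pow]; exact mul_le_mul_of_nonneg_right hnum (by positivity)
    _ = (2*ν)^2 * x^2 := by ring

/-- `x^a * y^(-a) ≤ x^a + 1` for `0 < x ≤ y ≤ 1` -/
private lemma aux_prod (a x y : ℝ) (hx : 0 < x) (hxy : x ≤ y) (hy1 : y ≤ 1) :
    x ^ a * y ^ (-a) ≤ x ^ a + 1 := by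
  have hy : 0 < y := hx.trans_le hxy
  rcases le_total 0 a with ha | ha
  · have h1 : x ^ a * y ^ (-a) = (x / y) ^ a := by
      rw [Real.div_rpow hx.le hy.le, div_eq_mul_inv, ← Real.rpow_neg hy.le]
    rw [h1]
    have h2 : (x / y) ^ a ≤ 1 :=
      Real.rpow_le_one (by positivity) ((div_le_one hy).2 hxy) ha
    have h3 := Real.rpow_nonneg hx.le a
    linarith
  · have h2 : y ^ (-a) ≤ 1 := Real.rpow_le_one hy.le hy1 (by linarith)
    have h3 : x ^ a * y ^ (-a) ≤ x ^ a * 1 :=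
      mul_le_mul_of_nonneg_left h2 (Real.rpow_nonneg hx.le a)
    linarith

/-- integrability of `x ↦ x^a` on `Ioo 0 c` for `a > -1` -/
private lemma rpow_integrableOn (a c : ℝ) (ha : -1 < a) (hc : 0 ≤ c) :
    IntegrableOn (fun x : ℝ => x ^ a) (Ioo 0 c) := by
  have h := intervalIntegral.intervalIntegrable_rpow' (a := 0) (b := c) ha
  rw [intervalIntegrable_iff_integrableOn_Ioo_of_le hc] at h
  exact h

private lemma zpowNegTwoNonneg (x : ℝ) : 0 ≤ x ^ (-2 : ℤ) := by
  rw [zpow_neg]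
  exact inv_nonneg.2 (by rw [show ((2:ℤ)) = ((2:ℕ) : ℤ) by norm_num, zpow_natCast]; positivity)

private lemma zpowNegTwoEq (x : ℝ) : x ^ (-2 : ℤ) = (x ^ 2)⁻¹ := by
  rw [zpow_neg, show ((2:ℤ)) = ((2:ℕ) : ℤ) by norm_num, zpow_natCast]

/-- the inner integral bound -/
private lemma inner_bound (ν : ℝ) (hν : 0 < ν) {y : ℝ} (hy0 : 0 < y) (hy1 : y ≤ 1) :
    (∫ x in Ioo (0:ℝ) y,
        x ^ (-2 : ℤ) * (x ^ (ν + 1/2) * (y ^ (1/2 - ν) - y ^ (ν + 1/2)) / (2 * ν)) ^ 2)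
      ≤ y / (8 * ν^3) := by
  have hint : IntegrableOn (fun x : ℝ => x ^ (2*ν - 1) * (y ^ (1 - 2*ν) / (4 * ν^2)))
      (Ioo 0 y) := (rpow_integrableOn _ _ (by linarith) hy0.le).mul_const _
  have h1 : (∫ x in Ioo (0:ℝ) y,
        x ^ (-2 : ℤ) * (x ^ (ν + 1/2) * (y ^ (1/2 - ν) - y ^ (ν + 1/2)) / (2 * ν)) ^ 2)
      ≤ ∫ x in Ioo (0:ℝ) y, x ^ (2*ν - 1) * (y ^ (1 - 2*ν) / (4 * ν^2)) := by
    apply integral_mono_of_nonneg _ hint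
    · filter_upwards [ae_restrict_mem measurableSet_Ioo] with x hx
      rw [zpowNegTwoEq, ← div_eq_inv_mul, ← mul_div_assoc]
      exact k_le ν x y hν hx.1 hx.2.le hy1
    · filter_upwards with x
      exact mul_nonneg (zpowNegTwoNonneg x) (sq_nonneg _)
  have h2 : (∫ x in Ioo (0:ℝ) y, x ^ (2*ν - 1) * (y ^ (1 - 2*ν) / (4 * ν^2)))
      = y / (8 * ν^3) := by
    rw [← integral_Ioc_eq_integral_Ioo, ← intervalIntegral.integral_of_le hy0.le,
      intervalIntegral.integral_mul_const, integral_rpow (Or.inl (by linarith)),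
      show (2*ν - 1 + 1) = 2*ν by ring, Real.zero_rpow (by positivity : 2*ν ≠ 0), sub_zero,
      div_mul_div_comm, ← Real.rpow_add hy0, show (2*ν + (1 - 2*ν)) = 1 by ring,
      Real.rpow_one]
    congr 1
    ring
  linarith

/-- The operator `X⁻¹ L_ν⁻¹` is Hilbert–Schmidt: the function
`(x,y) ↦ x⁻¹ k_ν(min(x,y), max(x,y))` is square-integrable on `(0,1)²`, and
`∫₀¹ ∫₀^y x⁻² k_ν(x,y)² dx dy ≤ 1/(4ν³)`. -/
theorem model_resolvent_hilbert_schmidt (ν : ℝ) (hν : 0 < ν) :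
    let k : ℝ → ℝ → ℝ := fun x y =>
      x ^ (ν + 1/2) * (y ^ (1/2 - ν) - y ^ (ν + 1/2)) / (2 * ν)
    IntegrableOn (fun p : ℝ × ℝ => (p.1⁻¹ * k (min p.1 p.2) (max p.1 p.2)) ^ 2)
      (Ioo (0:ℝ) 1 ×ˢ Ioo (0:ℝ) 1) ∧
    (∫ y in Ioo (0:ℝ) 1, ∫ x in Ioo (0:ℝ) y, x ^ (-2 : ℤ) * (k x y) ^ 2) ≤ 1 / (4 * ν^3) := by
  intro k
  constructor
  · -- integrability on the square
    have hs : MeasurableSet (Ioo (0:ℝ) 1 ×ˢ Ioo (0:ℝ) 1) :=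
      measurableSet_Ioo.prod measurableSet_Ioo
    -- dominating function
    set g : ℝ × ℝ → ℝ :=
      fun p => (p.1 ^ (2*ν - 1) + p.2 ^ (2*ν - 1) + 1) / (4 * ν^2) with hg
    have hone : Integrable (fun _ : ℝ => (1:ℝ)) (volume.restrict (Ioo (0:ℝ) 1)) := by
      exact integrableOn_const (by simp [Real.volume_Ioo])
    have hI : Integrable (fun x : ℝ => x ^ (2*ν - 1)) (volume.restrict (Ioo (0:ℝ) 1)) :=
      rpow_integrableOn _ _ (by linarith) zero_le_one
    have hgint : IntegrableOn g (Ioo (0:ℝ) 1 ×ˢ Ioo (0:ℝ) 1) := by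
      rw [IntegrableOn, Measure.volume_eq_prod, ← Measure.prod_restrict]
      have h1 : Integrable (fun p : ℝ × ℝ => p.1 ^ (2*ν - 1))
          ((volume.restrict (Ioo (0:ℝ) 1)).prod (volume.restrict (Ioo (0:ℝ) 1))) := by
        simpa using hI.mul_prod hone
      have h2 : Integrable (fun p : ℝ × ℝ => p.2 ^ (2*ν - 1))
          ((volume.restrict (Ioo (0:ℝ) 1)).prod (volume.restrict (Ioo (0:ℝ) 1))) := by
        simpa using hone.mul_prod hI
      have h3 : Integrable (fun _ : ℝ × ℝ => (1:ℝ))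
          ((volume.restrict (Ioo (0:ℝ) 1)).prod (volume.restrict (Ioo (0:ℝ) 1))) := by
        simpa using hone.mul_prod hone
      exact ((h1.add h2).add h3).div_const _
    apply Integrable.mono' hgint
    · -- measurability
      apply Measurable.aestronglyMeasurable
      show Measurable fun p : ℝ × ℝ =>
        (p.1⁻¹ * ((min p.1 p.2) ^ (ν + 1/2) *
          ((max p.1 p.2) ^ (1/2 - ν) - (max p.1 p.2) ^ (ν + 1/2)) / (2 * ν))) ^ 2
      fun_prop
    · rw [ae_restrict_iff' hs]
      filter_upwards with p hp
      obtain ⟨hp1, hp2⟩ := hp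
      rw [Real.norm_eq_abs, abs_of_nonneg (sq_nonneg _)]
      rcases le_total p.1 p.2 with hle | hle
      · simp only [k, min_eq_left hle, max_eq_right hle]
        have heq : (p.1⁻¹ * (p.1 ^ (ν + 1/2) *
            (p.2 ^ (1/2 - ν) - p.2 ^ (ν + 1/2)) / (2 * ν))) ^ 2
            = (p.1 ^ (ν + 1/2) * (p.2 ^ (1/2 - ν) - p.2 ^ (ν + 1/2)) / (2 * ν)) ^ 2
              / p.1 ^ 2 := by
          rw [mul_pow, inv_pow]
          ring
        rw [heq]
        have h := k_le ν p.1 p.2 hν hp1.1 hle hp2.2.le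
        have haux : p.1 ^ (2*ν - 1) * p.2 ^ (1 - 2*ν)
            ≤ p.1 ^ (2*ν - 1) + p.2 ^ (2*ν - 1) + 1 := by
          have h4 := aux_prod (2*ν - 1) p.1 p.2 hp1.1 hle hp2.2.le
          rw [show (1 - 2*ν) = -(2*ν - 1) by ring]
          have h5 := Real.rpow_nonneg hp2.1.le (2*ν - 1)
          linarith
        calc (p.1 ^ (ν + 1/2) * (p.2 ^ (1/2 - ν) - p.2 ^ (ν + 1/2)) / (2 * ν)) ^ 2
              / p.1 ^ 2
            ≤ p.1 ^ (2*ν - 1) * p.2 ^ (1 - 2*ν) / (4 * ν^2) := h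
          _ ≤ g p := by
              simp only [hg]
              gcongr
      · simp only [k, min_eq_right hle, max_eq_left hle]
        have heq : (p.1⁻¹ * (p.2 ^ (ν + 1/2) *
            (p.1 ^ (1/2 - ν) - p.1 ^ (ν + 1/2)) / (2 * ν))) ^ 2
            = (p.2 ^ (ν + 1/2) * (p.1 ^ (1/2 - ν) - p.1 ^ (ν + 1/2)) / (2 * ν)) ^ 2
              / p.1 ^ 2 := by
          rw [mul_pow, inv_pow]
          ring
        rw [heq]
        have h := k_le2 ν p.1 p.2 hν hp2.1 hle hp1.2.le
        have h5 := Real.rpow_nonneg hp1.1.le (2*ν - 1)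
        have h6 := Real.rpow_nonneg hp2.1.le (2*ν - 1)
        calc (p.2 ^ (ν + 1/2) * (p.1 ^ (1/2 - ν) - p.1 ^ (ν + 1/2)) / (2 * ν)) ^ 2
              / p.1 ^ 2
            ≤ 1 / (4 * ν^2) := h
          _ ≤ g p := by
              simp only [hg]
              gcongr <;> linarith
  · -- the double integral bound
    have hcont : IntegrableOn (fun y : ℝ => y / (8 * ν^3)) (Ioo (0:ℝ) 1) := by
      apply (continuous_id.div_const (8 * ν^3)).integrableOn_Ioc.mono_set
      exact Ioo_subset_Ioc_self
    calc (∫ y in Ioo (0:ℝ) 1, ∫ x in Ioo (0:ℝ) y, x ^ (-2 : ℤ) * (k x y) ^ 2)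
        ≤ ∫ y in Ioo (0:ℝ) 1, y / (8 * ν^3) := by
          apply integral_mono_of_nonneg _ hcont
          · filter_upwards [ae_restrict_mem measurableSet_Ioo] with y hy
            exact inner_bound ν hν hy.1 hy.2.le
          · filter_upwards with y
            apply integral_nonneg
            intro x
            exact mul_nonneg (zpowNegTwoNonneg x) (sq_nonneg _)
      _ = 1 / (16 * ν^3) := by
          rw [← integral_Ioc_eq_integral_Ioo, ← intervalIntegral.integral_of_le zero_le_one,
            intervalIntegral.integral_div, integral_id]
          norm_num
          ring
      _ ≤ 1 / (4 * ν^3) := by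
          gcongr
          nlinarith [pow_pos hν 3]
end

section
/- For every real ν ≥ 0 there exists a constant c > 0 such that for every smooth function f : ℝ → ℝ with compact support contained in (0,1) and every x ∈ (0,1), one has |f(x)|² ≤ c²·x·|log x|·∫₀¹ ( f'(t) + (ν − 1/2)·t^(−1)·f(t) )² dt. (In operator language: |f(x)| ≤ c·|x log x|^(1/2)·‖D_ν f‖ for f in the minimal domain of D_ν, where D_ν = d/dx + (ν − 1/2)x^(−1) and ‖·‖ is the L²[0,1] norm.) -/
open Set MeasureTheory

/-- Cauchy–Schwarz for interval integrals of continuous functions. -/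
private lemma cs_interval (u v : ℝ → ℝ) {x y : ℝ} (hxy : x ≤ y)
    (hu : ContinuousOn u (Icc x y)) (hv : ContinuousOn v (Icc x y)) :
    (∫ t in x..y, u t * v t) ^ 2 ≤ (∫ t in x..y, u t ^ 2) * (∫ t in x..y, v t ^ 2) := by
  have huv : IntervalIntegrable (fun t => u t * v t) volume x y :=
    (hu.mul hv).intervalIntegrable_of_Icc hxy
  have hu2 : IntervalIntegrable (fun t => u t ^ 2) volume x y :=
    (hu.pow 2).intervalIntegrable_of_Icc hxy
  have hv2 : IntervalIntegrable (fun t => v t ^ 2) volume x y :=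
    (hv.pow 2).intervalIntegrable_of_Icc hxy
  set I := ∫ t in x..y, u t ^ 2 with hI
  set J := ∫ t in x..y, v t ^ 2 with hJ
  set K := ∫ t in x..y, u t * v t with hK
  have key : ∀ lam : ℝ, 0 ≤ J * (lam * lam) + (-(2 * K)) * lam + I := by
    intro lam
    have h0 : 0 ≤ ∫ t in x..y, (u t - lam * v t) ^ 2 :=
      intervalIntegral.integral_nonneg hxy (fun t _ => sq_nonneg _)
    have hexp : (∫ t in x..y, (u t - lam * v t) ^ 2)
        = I - 2 * lam * K + lam ^ 2 * J := by
      have hfun : (fun t => (u t - lam * v t) ^ 2)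
          = fun t => (u t ^ 2 - (2 * lam) * (u t * v t)) + lam ^ 2 * v t ^ 2 := by
        funext t; ring
      rw [hfun, intervalIntegral.integral_add (hu2.sub (huv.const_mul _)) (hv2.const_mul _),
        intervalIntegral.integral_sub hu2 (huv.const_mul _),
        intervalIntegral.integral_const_mul, intervalIntegral.integral_const_mul]
    rw [hexp] at h0
    nlinarith [h0]
  have hd := discrim_le_zero key
  rw [discrim] at hd
  nlinarith [hd]

/-- Sobolev-type estimate: for `ν ≥ 0` there is `c > 0` such that every smooth `f`
compactly supported in `(0,1)` satisfies
`|f(x)|² ≤ c² x |log x| ∫₀¹ (f'(t) + (ν - 1/2) t⁻¹ f(t))² dt`, i.e.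
`|f(x)| ≤ c |x log x|^(1/2) ‖D_ν f‖`. -/
theorem pointwise_estimate_Dnu (ν : ℝ) (hν : 0 ≤ ν) :
    ∃ c > (0:ℝ), ∀ f : ℝ → ℝ, ContDiff ℝ (⊤ : ℕ∞) f → tsupport f ⊆ Ioo 0 1 →
      ∀ x ∈ Ioo (0:ℝ) 1,
        |f x| ^ 2 ≤ c ^ 2 * x * |Real.log x| *
          ∫ t in (0:ℝ)..1, (deriv f t + (ν - 1/2) * t⁻¹ * f t) ^ 2 := by
  have hlog2 : (0:ℝ) < Real.log 2 := Real.log_pos one_lt_two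
  set c2 : ℝ := 2 ^ (2*ν : ℝ) + 1/(2*ν*Real.log 2) + 1 with hc2def
  have hApos : (0:ℝ) < 2 ^ (2*ν : ℝ) := Real.rpow_pos_of_pos two_pos _
  have hBnn : (0:ℝ) ≤ 1/(2*ν*Real.log 2) :=
    div_nonneg zero_le_one (mul_nonneg (by linarith) hlog2.le)
  have hc2pos : 0 < c2 := by simp only [hc2def]; linarith
  have hAle : (2:ℝ) ^ (2*ν : ℝ) ≤ c2 := by simp only [hc2def]; linarith
  have hBle : 1/(2*ν*Real.log 2) ≤ c2 := by simp only [hc2def]; linarith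
  have h1le : (1:ℝ) ≤ c2 := by simp only [hc2def]; linarith
  refine ⟨Real.sqrt c2, Real.sqrt_pos.mpr hc2pos, ?_⟩
  intro f hf hsupp x hx
  rw [Real.sq_sqrt hc2pos.le, abs_of_neg (Real.log_neg hx.1 hx.2), sq_abs]
  set g : ℝ → ℝ := fun t => deriv f t + (ν - 1/2) * t⁻¹ * f t with hgdef
  show f x ^ 2 ≤ c2 * x * (-Real.log x) * ∫ t in (0:ℝ)..1, g t ^ 2
  set J : ℝ := ∫ t in (0:ℝ)..1, g t ^ 2 with hJdef
  have hJ0 : 0 ≤ J := intervalIntegral.integral_nonneg zero_le_one (fun t _ => sq_nonneg _)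
  have hlx : (0:ℝ) ≤ -Real.log x := by
    have := Real.log_neg hx.1 hx.2; linarith
  have htriv : f x = 0 → f x ^ 2 ≤ c2 * x * (-Real.log x) * J := by
    intro h0; rw [h0]
    simpa using mul_nonneg (mul_nonneg (mul_nonneg hc2pos.le hx.1.le) hlx) hJ0
  by_cases hK0 : tsupport f = ∅
  · exact htriv (image_eq_zero_of_notMem_tsupport (by simp [hK0]))
  have hKne : (tsupport f).Nonempty := nonempty_iff_ne_empty.mpr hK0
  have hKcomp : IsCompact (tsupport f) :=
    Metric.isCompact_of_isClosed_isBounded (isClosed_tsupport f)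
      ((Metric.isBounded_Ioo 0 1).subset hsupp)
  set a : ℝ := sInf (tsupport f) with hadef
  have haK : a ∈ tsupport f := hKcomp.sInf_mem hKne
  have ha : a ∈ Ioo (0:ℝ) 1 := hsupp haK
  have hbelow : ∀ t : ℝ, t < a → f t = 0 := by
    intro t ht
    refine image_eq_zero_of_notMem_tsupport (fun hmem => ?_)
    exact absurd (csInf_le hKcomp.isBounded.bddBelow hmem) (not_le.mpr ht)
  have hderiv0 : ∀ t : ℝ, t < a → deriv f t = 0 := by
    intro t ht
    have hev : f =ᶠ[nhds t] fun _ => (0:ℝ) :=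
      Filter.eventuallyEq_of_mem (Iio_mem_nhds ht) (fun s hs => hbelow s hs)
    rw [hev.deriv_eq]; exact deriv_const t 0
  have hg0 : ∀ t : ℝ, t < a → g t = 0 := by
    intro t ht; simp [hgdef, hbelow t ht, hderiv0 t ht]
  have hfd : Differentiable ℝ f := hf.differentiable (by simp)
  have hfd' : Continuous (deriv f) := hf.continuous_deriv (by simp)
  have hgcont : Continuous g := by
    rw [continuous_iff_continuousAt]
    intro t
    rcases lt_or_ge 0 t with ht | ht
    · exact hfd'.continuousAt.add
        (((continuousAt_const.mul (continuousAt_inv₀ ht.ne'))).mul hfd.continuous.continuousAt)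
    · have hta : t < a := lt_of_le_of_lt ht ha.1
      have hev : g =ᶠ[nhds t] fun _ => (0:ℝ) :=
        Filter.eventuallyEq_of_mem (Iio_mem_nhds hta) (fun s hs => hg0 s hs)
      exact hev.continuousAt
  have hgsub : ∀ s r : ℝ, 0 ≤ s → s ≤ r → r ≤ 1 → (∫ t in s..r, g t ^ 2) ≤ J := by
    intro s r h0s hsr hr1
    exact intervalIntegral.integral_mono_interval h0s hsr hr1
      (Filter.Eventually.of_forall (fun t => sq_nonneg _))
      ((hgcont.pow 2).intervalIntegrable 0 1)
  -- the weight and the primitive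
  set p : ℝ := ν - 1/2 with hpdef
  set w : ℝ → ℝ := fun t => t ^ p with hwdef
  have hwcont : ∀ t : ℝ, 0 < t → ContinuousAt w t :=
    fun t ht => Real.continuousAt_rpow_const t p (Or.inl ht.ne')
  have hwcOn : ∀ {s r : ℝ}, 0 < s → ContinuousOn w (Icc s r) :=
    fun {s r} hs t ht => (hwcont t (hs.trans_le ht.1)).continuousWithinAt
  set h : ℝ → ℝ := fun t => w t * f t with hhdef
  have hw2 : ∀ t : ℝ, 0 < t → w t ^ 2 = t ^ (2*ν - 1 : ℝ) := by
    intro t ht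
    rw [hwdef, sq, ← Real.rpow_add ht]
    congr 1; rw [hpdef]; ring
  have hdh : ∀ t : ℝ, 0 < t → HasDerivAt h (w t * g t) t := by
    intro t ht
    have h1 : HasDerivAt (fun s : ℝ => s ^ p) (p * t ^ (p - 1)) t :=
      Real.hasDerivAt_rpow_const (Or.inl ht.ne')
    have h2 : HasDerivAt f (deriv f t) t := (hfd t).hasDerivAt
    have h3 := h1.mul h2
    have h4 : t ^ (p - 1) = t ^ p * t⁻¹ := by
      rw [Real.rpow_sub ht, Real.rpow_one, div_eq_mul_inv]
    refine h3.congr_deriv ?_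
    rw [hgdef, hwdef, hpdef, h4]
    simp only []
    ring
  have hftc : ∀ s r : ℝ, 0 < s → s ≤ r → (∫ t in s..r, w t * g t) = h r - h s := by
    intro s r hs hsr
    apply intervalIntegral.integral_eq_sub_of_hasDerivAt
    · intro t ht
      rw [uIcc_of_le hsr] at ht
      exact hdh t (lt_of_lt_of_le hs ht.1)
    · apply ContinuousOn.intervalIntegrable
      rw [uIcc_of_le hsr]
      exact (hwcOn hs).mul hgcont.continuousOn
  have hfx2 : f x ^ 2 = x ^ ((1:ℝ) - 2*ν) * (h x ^ 2) := by
    have h1 : h x ^ 2 = x ^ (2*ν - 1 : ℝ) * f x ^ 2 := by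
      rw [hhdef]; simp only []; rw [mul_pow, hw2 x hx.1]
    rw [h1, ← mul_assoc, ← Real.rpow_add hx.1]
    norm_num
  have hrpnn : (0:ℝ) ≤ x ^ ((1:ℝ) - 2*ν) := (Real.rpow_pos_of_pos hx.1 _).le
  -- backward estimate, valid for all x ∈ (0,1)
  have hh1 : h 1 = 0 := by
    have : f 1 = 0 := image_eq_zero_of_notMem_tsupport (fun hm => (lt_irrefl 1 (hsupp hm).2))
    rw [hhdef]; simp [this]
  have hback : h x ^ 2 = (∫ t in x..1, w t * g t) ^ 2 := by
    rw [hftc x 1 hx.1 hx.2.le, hh1]; ring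
  have hg2x1 : 0 ≤ ∫ t in x..1, g t ^ 2 :=
    intervalIntegral.integral_nonneg hx.2.le (fun t _ => sq_nonneg _)
  have hwint : ∫ t in x..1, w t ^ 2 ≤ -Real.log x := by
    have hcongr : (∫ t in x..1, w t ^ 2) = ∫ t in x..1, (t:ℝ) ^ (2*ν - 1 : ℝ) := by
      apply intervalIntegral.integral_congr
      intro t ht
      rw [uIcc_of_le hx.2.le] at ht
      exact hw2 t (hx.1.trans_le ht.1)
    have hcont1 : ContinuousOn (fun t : ℝ => t ^ (2*ν - 1 : ℝ)) (Icc x 1) :=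
      fun t ht => (Real.continuousAt_rpow_const t _ (Or.inl (hx.1.trans_le ht.1).ne')).continuousWithinAt
    have hcont2 : ContinuousOn (fun t : ℝ => t⁻¹) (Icc x 1) :=
      fun t ht => (continuousAt_inv₀ (hx.1.trans_le ht.1).ne').continuousWithinAt
    have hmono : (∫ t in x..1, (t:ℝ) ^ (2*ν - 1 : ℝ)) ≤ ∫ t in x..1, t⁻¹ := by
      apply intervalIntegral.integral_mono_on hx.2.le
        (hcont1.intervalIntegrable_of_Icc hx.2.le) (hcont2.intervalIntegrable_of_Icc hx.2.le)
      intro t ht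
      have ht0 : 0 < t := hx.1.trans_le ht.1
      have := Real.rpow_le_rpow_of_exponent_ge ht0 ht.2 (by linarith : (-1:ℝ) ≤ 2*ν - 1)
      rwa [Real.rpow_neg_one] at this
    have hinv : (∫ t in x..1, (t:ℝ)⁻¹) = -Real.log x := by
      rw [integral_inv (by
        rw [uIcc_of_le hx.2.le]
        exact fun hc => lt_irrefl (0:ℝ) (lt_of_lt_of_le hx.1 hc.1))]
      rw [one_div, Real.log_inv]
    rw [hcongr]; rw [hinv] at hmono; exact hmono
  have hkey : f x ^ 2 ≤ x ^ ((1:ℝ) - 2*ν) * ((-Real.log x) * J) := by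
    rw [hfx2]
    apply mul_le_mul_of_nonneg_left _ hrpnn
    rw [hback]
    calc (∫ t in x..1, w t * g t) ^ 2
        ≤ (∫ t in x..1, w t ^ 2) * (∫ t in x..1, g t ^ 2) :=
          cs_interval w g hx.2.le (hwcOn hx.1) hgcont.continuousOn
      _ ≤ (-Real.log x) * J :=
          mul_le_mul hwint (hgsub x 1 hx.1.le hx.2.le le_rfl) hg2x1 hlx
  rcases le_or_gt (1/2 : ℝ) x with hhalf | hhalf
  · -- x ≥ 1/2 : use hkey with x^(1-2ν) ≤ 2^(2ν) x
    have hinvle : x⁻¹ ≤ 2 := by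
      rw [show (2:ℝ) = (2⁻¹:ℝ)⁻¹ by norm_num]
      exact inv_anti₀ (by norm_num) (by linarith)
    have hxp : x ^ ((1:ℝ) - 2*ν) ≤ 2 ^ (2*ν : ℝ) * x := by
      have e1 : x ^ ((1:ℝ) - 2*ν) = x * x ^ (-(2*ν) : ℝ) := by
        rw [show (1:ℝ) - 2*ν = 1 + (-(2*ν)) by ring, Real.rpow_add hx.1, Real.rpow_one]
      have e2 : x ^ (-(2*ν) : ℝ) ≤ 2 ^ (2*ν : ℝ) := by
        rw [Real.rpow_neg hx.1.le, ← Real.inv_rpow hx.1.le]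
        exact Real.rpow_le_rpow (inv_nonneg.mpr hx.1.le) hinvle (by linarith)
      calc x ^ ((1:ℝ) - 2*ν) = x * x ^ (-(2*ν) : ℝ) := e1
        _ ≤ x * 2 ^ (2*ν : ℝ) := mul_le_mul_of_nonneg_left e2 hx.1.le
        _ = 2 ^ (2*ν : ℝ) * x := mul_comm _ _
    have hbase : 0 ≤ (-Real.log x) * J := mul_nonneg hlx hJ0
    calc f x ^ 2 ≤ x ^ ((1:ℝ) - 2*ν) * ((-Real.log x) * J) := hkey
      _ ≤ (2 ^ (2*ν : ℝ) * x) * ((-Real.log x) * J) := mul_le_mul_of_nonneg_right hxp hbase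
      _ = 2 ^ (2*ν : ℝ) * (x * ((-Real.log x) * J)) := by ring
      _ ≤ c2 * (x * ((-Real.log x) * J)) :=
          mul_le_mul_of_nonneg_right hAle (mul_nonneg hx.1.le hbase)
      _ = c2 * x * (-Real.log x) * J := by ring
  · rcases hν.eq_or_lt with hν0 | hνpos
    · -- ν = 0 : hkey directly, x^(1-0) = x
      have hxp : x ^ ((1:ℝ) - 2*ν) = x := by
        rw [← hν0]; norm_num
      have hbase : 0 ≤ x * ((-Real.log x) * J) := mul_nonneg hx.1.le (mul_nonneg hlx hJ0)
      calc f x ^ 2 ≤ x ^ ((1:ℝ) - 2*ν) * ((-Real.log x) * J) := hkey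
        _ = 1 * (x * ((-Real.log x) * J)) := by rw [hxp]; ring
        _ ≤ c2 * (x * ((-Real.log x) * J)) := mul_le_mul_of_nonneg_right h1le hbase
        _ = c2 * x * (-Real.log x) * J := by ring
    · -- ν > 0, x < 1/2 : forward estimate from a/2
      by_cases hfx : f x = 0
      · exact htriv hfx
      have hax : a ≤ x :=
        csInf_le hKcomp.isBounded.bddBelow (subset_tsupport f (by simpa using hfx))
      set m : ℝ := a/2 with hmdef
      have hm0 : 0 < m := by simp only [hmdef]; linarith [ha.1]
      have hma : m < a := by simp only [hmdef]; linarith [ha.1]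
      have hmx : m ≤ x := le_of_lt (lt_of_lt_of_le hma hax)
      have hhm : h m = 0 := by
        rw [hhdef]; simp [hbelow m hma]
      have hfwd : h x ^ 2 = (∫ t in m..x, w t * g t) ^ 2 := by
        rw [hftc m x hm0 hmx, hhm]; ring
      have hg2mx : 0 ≤ ∫ t in m..x, g t ^ 2 :=
        intervalIntegral.integral_nonneg hmx (fun t _ => sq_nonneg _)
      have h2ν : (0:ℝ) < 2*ν := by linarith
      have hwint2 : ∫ t in m..x, w t ^ 2 ≤ x ^ (2*ν : ℝ) / (2*ν) := by
        have hcongr : (∫ t in m..x, w t ^ 2) = ∫ t in m..x, (t:ℝ) ^ (2*ν - 1 : ℝ) := by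
          apply intervalIntegral.integral_congr
          intro t ht
          rw [uIcc_of_le hmx] at ht
          exact hw2 t (hm0.trans_le ht.1)
        rw [hcongr, integral_rpow (Or.inl (by linarith : (-1:ℝ) < 2*ν - 1))]
        rw [show (2*ν - 1 + 1 : ℝ) = 2*ν by ring]
        have hmrp : 0 ≤ m ^ (2*ν : ℝ) := (Real.rpow_pos_of_pos hm0 _).le
        exact div_le_div_of_nonneg_right (by linarith) h2ν.le
      have hcs : h x ^ 2 ≤ (x ^ (2*ν : ℝ) / (2*ν)) * J := by
        rw [hfwd]
        calc (∫ t in m..x, w t * g t) ^ 2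
            ≤ (∫ t in m..x, w t ^ 2) * (∫ t in m..x, g t ^ 2) :=
              cs_interval w g hmx (hwcOn hm0) hgcont.continuousOn
          _ ≤ (x ^ (2*ν : ℝ) / (2*ν)) * J :=
              mul_le_mul hwint2 (hgsub m x hm0.le hmx hx.2.le) hg2mx
                (div_nonneg (Real.rpow_pos_of_pos hx.1 _).le h2ν.le)
      have hxx : x ^ ((1:ℝ) - 2*ν) * x ^ (2*ν : ℝ) = x := by
        rw [← Real.rpow_add hx.1]; norm_num
      have hcollapse : x ^ ((1:ℝ) - 2*ν) * (x ^ (2*ν : ℝ) / (2*ν) * J) = x / (2*ν) * J := by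
        rw [show x ^ ((1:ℝ) - 2*ν) * (x ^ (2*ν : ℝ) / (2*ν) * J)
            = (x ^ ((1:ℝ) - 2*ν) * x ^ (2*ν : ℝ)) * (J / (2*ν)) by ring, hxx]
        ring
      have hlog : Real.log 2 ≤ -Real.log x := by
        have h1 : Real.log x ≤ Real.log (1/2) := Real.log_le_log hx.1 hhalf.le
        have h2 : Real.log (1/2 : ℝ) = -Real.log 2 := by
          rw [one_div, Real.log_inv]
        linarith [h1, h2 ▸ h1]
      have hstep : x / (2*ν) * J ≤ (1/(2*ν*Real.log 2)) * (x * (-Real.log x)) * J := by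
        apply mul_le_mul_of_nonneg_right _ hJ0
        have hpos : (0:ℝ) < 2*ν*Real.log 2 := mul_pos h2ν hlog2
        have e1 : x * Real.log 2 ≤ x * (-Real.log x) :=
          mul_le_mul_of_nonneg_left hlog hx.1.le
        calc x / (2*ν) = (x * Real.log 2) / (2*ν*Real.log 2) := by
              rw [div_eq_div_iff h2ν.ne' hpos.ne']; ring
          _ ≤ (x * (-Real.log x)) / (2*ν*Real.log 2) :=
              div_le_div_of_nonneg_right e1 hpos.le
          _ = (1/(2*ν*Real.log 2)) * (x * (-Real.log x)) := by ring
      have hbase : 0 ≤ x * (-Real.log x) * J := mul_nonneg (mul_nonneg hx.1.le hlx) hJ0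
      calc f x ^ 2 = x ^ ((1:ℝ) - 2*ν) * (h x ^ 2) := hfx2
        _ ≤ x ^ ((1:ℝ) - 2*ν) * ((x ^ (2*ν : ℝ) / (2*ν)) * J) :=
            mul_le_mul_of_nonneg_left hcs hrpnn
        _ = x / (2*ν) * J := hcollapse
        _ ≤ (1/(2*ν*Real.log 2)) * (x * (-Real.log x)) * J := hstep
        _ ≤ c2 * (x * (-Real.log x)) * J := by
            apply mul_le_mul_of_nonneg_right _ hJ0
            exact mul_le_mul_of_nonneg_right hBle (mul_nonneg hx.1.le hlx)
        _ = c2 * x * (-Real.log x) * J := by ring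
end

section
/- Fix ν > 0 and define, for real s in a neighborhood of −1, G(s) := Γ((s+3)/2)·Γ(−s/2)·Γ(ν + (s+1)/2) / (2·√π·Γ(ν + (1−s)/2)), where Γ is the real Gamma function. Then G is differentiable at s = −1 with G(−1) = 1/(2ν) and G'(−1) = (log 2)/(2ν) + (1/(4ν))·( Γ'(ν)/Γ(ν) + Γ'(ν+1)/Γ(ν+1) ). (G(s) is the regular factor (s+1)·F(s) of the Mellin transform F(s) = ∫₀^∞ x^s I_ν(x)K_ν(x) dx = Γ((s+1)/2)Γ(−s/2)Γ(ν+(s+1)/2)/(4√π Γ(ν−(s−1)/2)) at its simple pole s = −1, and the claimed value of G'(−1) is the constant term in the Laurent expansion of F at s = −1, i.e. the regularized integral −∫₀^∞ x^(−1) I_ν K_ν(x) dx.) -/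
open Real

/-- The regular factor `G(s) = (s+1) F(s)` of the Mellin transform
`F(s) = ∫₀^∞ x^s I_ν K_ν(x) dx` at its simple pole `s = -1`:
`G(s) = Γ((s+3)/2) Γ(-s/2) Γ(ν+(s+1)/2) / (2 √π Γ(ν+(1-s)/2))` satisfies
`G(-1) = 1/(2ν)` and `G'(-1) = (log 2)/(2ν) + (1/(4ν))(Γ'/Γ(ν) + Γ'/Γ(ν+1))`. -/
theorem mellin_bessel_regular_factor (ν : ℝ) (hν : 0 < ν) :
    let G : ℝ → ℝ := fun s =>
      Real.Gamma ((s + 3) / 2) * Real.Gamma (-s / 2) * Real.Gamma (ν + (s + 1) / 2) /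
        (2 * Real.sqrt π * Real.Gamma (ν + (1 - s) / 2))
    G (-1) = 1 / (2 * ν) ∧
    HasDerivAt G
      (Real.log 2 / (2 * ν) +
        (1 / (4 * ν)) *
          (deriv Real.Gamma ν / Real.Gamma ν + deriv Real.Gamma (ν + 1) / Real.Gamma (ν + 1)))
      (-1) := by
  intro G
  have hΓν : Real.Gamma ν ≠ 0 := (Real.Gamma_pos_of_pos hν).ne'
  have hsπ : Real.sqrt π ≠ 0 := (Real.sqrt_pos.mpr Real.pi_pos).ne'
  have hν' : ν ≠ 0 := hν.ne'
  have hΓν1 : Real.Gamma (ν + 1) = ν * Real.Gamma ν := Real.Gamma_add_one hν'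
  -- inner functions
  have h1 : HasDerivAt (fun s : ℝ => (s + 3) / 2) (1 / 2) (-1) := by
    simpa using ((hasDerivAt_id (-1 : ℝ)).add_const 3).div_const 2
  have h2 : HasDerivAt (fun s : ℝ => -s / 2) (-1 / 2) (-1) := by
    simpa using ((hasDerivAt_id (-1 : ℝ)).neg.div_const 2)
  have h3 : HasDerivAt (fun s : ℝ => ν + (s + 1) / 2) (1 / 2) (-1) := by
    simpa using (((hasDerivAt_id (-1 : ℝ)).add_const 1).div_const 2).const_add ν
  have h4 : HasDerivAt (fun s : ℝ => ν + (1 - s) / 2) (-1 / 2) (-1) := by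
    simpa using (((hasDerivAt_id (-1 : ℝ)).const_sub 1).div_const 2).const_add ν
  -- outer Gamma derivatives at the right points
  have hg1 : HasDerivAt Real.Gamma (-Real.eulerMascheroniConstant) (((-1 : ℝ) + 3) / 2) := by
    norm_num [Real.hasDerivAt_Gamma_one]
  have hg2 : HasDerivAt Real.Gamma
      (-Real.sqrt π * (Real.eulerMascheroniConstant + 2 * Real.log 2)) (-(-1 : ℝ) / 2) := by
    rw [show -(-1 : ℝ) / 2 = 1 / 2 by norm_num]
    exact Real.hasDerivAt_Gamma_one_half
  have hg3 : HasDerivAt Real.Gamma (deriv Real.Gamma ν) (ν + ((-1 : ℝ) + 1) / 2) := by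
    have : ν + ((-1 : ℝ) + 1) / 2 = ν := by ring
    rw [this]
    exact (Real.differentiableAt_Gamma fun m => by
      have := m.cast_nonneg (α := ℝ); intro h; nlinarith).hasDerivAt
  have hg4 : HasDerivAt Real.Gamma (deriv Real.Gamma (ν + 1)) (ν + (1 - (-1 : ℝ)) / 2) := by
    have : ν + (1 - (-1 : ℝ)) / 2 = ν + 1 := by ring
    rw [this]
    exact (Real.differentiableAt_Gamma fun m => by
      have := m.cast_nonneg (α := ℝ); intro h; nlinarith).hasDerivAt
  have hA := hg1.comp (-1) h1
  have hB := hg2.comp (-1) h2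
  have hC := hg3.comp (-1) h3
  have hD := (hg4.comp (-1) h4).const_mul (2 * Real.sqrt π)
  -- values
  have v1 : Real.Gamma (((-1 : ℝ) + 3) / 2) = 1 := by norm_num [Real.Gamma_one]
  have v2 : Real.Gamma (-(-1 : ℝ) / 2) = Real.sqrt π := by
    norm_num [Real.Gamma_one_half_eq]
  have v3 : Real.Gamma (ν + ((-1 : ℝ) + 1) / 2) = Real.Gamma ν := by norm_num
  have v4 : Real.Gamma (ν + (1 - (-1 : ℝ)) / 2) = ν * Real.Gamma ν := by
    rw [show ν + (1 - (-1 : ℝ)) / 2 = ν + 1 by ring, hΓν1]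
  have hDval : (2 * Real.sqrt π * Real.Gamma (ν + (1 - (-1 : ℝ)) / 2)) ≠ 0 := by
    rw [v4]; positivity
  constructor
  · show Real.Gamma _ * Real.Gamma _ * Real.Gamma _ / _ = _
    rw [v1, v2, v3, v4]
    field_simp
  · have hG := ((hA.mul hB).mul hC).div hD hDval
    refine hG.congr_deriv ?_
    simp only [Function.comp, Pi.mul_apply, Function.comp_apply, v1, v2, v3, v4]
    rw [Real.eulerMascheroniConstant_eq_neg_deriv]
    have hπ : Real.sqrt π * Real.sqrt π = π := Real.mul_self_sqrt Real.pi_pos.le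
    field_simp [hΓν1]
    rw [hΓν1]; ring
end
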